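/- arXiv:2108.08067 — 2 statements merged into one kernel-verified Lean document; each statement's English description precedes it below -/
import Mathlib

section
/- In a 2-CNF implication digraph, if C and C' are two distinct contradictory strongly connected components, then there is no directed path from any vertex of C to any vertex of C'. -/
/-! If `x ∈ C` and `y ∈ C'` are contradictory and `C` reaches `C'`, then `x ⟶ y`, and the
contrapositive path `¬y ⟶ ¬x` closes the cycle `y ⟶ ¬y ⟶ ¬x ⟶ x`. So `x` and `y` are
mutually reachable, which forces the two components to coincide. -/

abbrev Lit (n : ℕ) := Fin n × Bool

def negLit {n : ℕ} (x : Lit n) : Lit n := (x.1, !x.2)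

def Reach {n : ℕ} (E : Lit n → Lit n → Prop) : Lit n → Lit n → Prop :=
  Relation.ReflTransGen E

def IsSCC {n : ℕ} (E : Lit n → Lit n → Prop) (C : Set (Lit n)) : Prop :=
  C.Nonempty ∧ (∀ x ∈ C, ∀ y ∈ C, Reach E x y) ∧
    ∀ D : Set (Lit n), C ⊆ D → (∀ x ∈ D, ∀ y ∈ D, Reach E x y) → D = C

def ContraLit {n : ℕ} (E : Lit n → Lit n → Prop) (x : Lit n) : Prop :=
  Reach E x (negLit x) ∧ Reach E (negLit x) x

def SourceLike {n : ℕ} (E : Lit n → Lit n → Prop) (C : Set (Lit n)) : Prop :=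
  ∀ u ∉ C, ∀ v ∈ C, ¬ E u v

def SinkLike {n : ℕ} (E : Lit n → Lit n → Prop) (C : Set (Lit n)) : Prop :=
  ∀ u ∈ C, ∀ v ∉ C, ¬ E u v

section ImplicationDigraph

variable {n : ℕ} {E : Lit n → Lit n → Prop}

theorem reach_negLit_of_reach (hsym : ∀ k l, E k l → E (negLit l) (negLit k))
    {a b : Lit n} (h : Reach E a b) : Reach E (negLit b) (negLit a) := by
  induction h with
  | refl => exact .refl
  | tail _ hbc ih => exact .head (hsym _ _ hbc) ih

theorem ContraLit.reach_of_reach (hsym : ∀ k l, E k l → E (negLit l) (negLit k))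
    {x y : Lit n} (hx : ContraLit E x) (hy : ContraLit E y) (hxy : Reach E x y) :
    Reach E y x :=
  hy.1.trans ((reach_negLit_of_reach hsym hxy).trans hx.2)

theorem IsSCC.eq_of_reach_of_reach {C C' : Set (Lit n)} (hC : IsSCC E C) (hC' : IsSCC E C')
    {x y : Lit n} (hx : x ∈ C) (hy : y ∈ C') (hxy : Reach E x y) (hyx : Reach E y x) :
    C = C' := by
  obtain ⟨-, hCr, hCmax⟩ := hC
  obtain ⟨-, hC'r, hC'max⟩ := hC'
  have hunion : ∀ a ∈ C ∪ C', ∀ b ∈ C ∪ C', Reach E a b := by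
    rintro a (ha | ha) b (hb | hb)
    · exact hCr a ha b hb
    · exact (hCr a ha x hx).trans (hxy.trans (hC'r y hy b hb))
    · exact (hC'r a ha y hy).trans (hyx.trans (hCr x hx b hb))
    · exact hC'r a ha b hb
  exact (hCmax _ Set.subset_union_left hunion).symm.trans
    (hC'max _ Set.subset_union_right hunion)

end ImplicationDigraph

/-- There is no directed path from one contradictory SCC to a distinct one. -/
theorem stmt2 {n : ℕ} (E : Lit n → Lit n → Prop)
    (hsym : ∀ k l, E k l → E (negLit l) (negLit k))
    (C C' : Set (Lit n)) (hC : IsSCC E C) (hC' : IsSCC E C') (hne : C ≠ C')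
    (hcontra : ∃ x ∈ C, ContraLit E x) (hcontra' : ∃ x ∈ C', ContraLit E x) :
    ∀ u ∈ C, ∀ v ∈ C', ¬ Reach E u v := by
  rintro u hu v hv huv
  obtain ⟨x, hxC, hx⟩ := hcontra
  obtain ⟨y, hyC', hy⟩ := hcontra'
  have hxy : Reach E x y := (hC.2.1 x hxC u hu).trans (huv.trans (hC'.2.1 v hv y hyC'))
  exact hne (hC.eq_of_reach_of_reach hC' hxC hyC' hxy (hx.reach_of_reach hsym hy hxy))
end

section
/- In a 2-CNF implication digraph, if C is an ordinary (non-contradictory) source-like strongly connected component, then the set ¬C of negations of its literals is a sink-like strongly connected component disjoint from C. -/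
@[simp]
lemma negLit_negLit {n : ℕ} (x : Lit n) : negLit (negLit x) = x := by
  simp [negLit]

@[simp]
lemma image_negLit_image_negLit {n : ℕ} (s : Set (Lit n)) : negLit '' (negLit '' s) = s := by
  simp [Set.image_image]

lemma Reach.negLit {n : ℕ} {E : Lit n → Lit n → Prop}
    (hsym : ∀ k l, E k l → E (negLit l) (negLit k)) {a b : Lit n} (h : Reach E a b) :
    Reach E (negLit b) (negLit a) := by
  induction h with
  | refl => exact Relation.ReflTransGen.refl
  | tail _ hbc ih => exact Relation.ReflTransGen.head (hsym _ _ hbc) ih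

lemma reach_image_negLit {n : ℕ} {E : Lit n → Lit n → Prop}
    (hsym : ∀ k l, E k l → E (negLit l) (negLit k)) {D : Set (Lit n)}
    (hD : ∀ x ∈ D, ∀ y ∈ D, Reach E x y) :
    ∀ x ∈ negLit '' D, ∀ y ∈ negLit '' D, Reach E x y := by
  rintro _ ⟨x, hx, rfl⟩ _ ⟨y, hy, rfl⟩
  exact (hD y hy x hx).negLit hsym

lemma IsSCC.image_negLit {n : ℕ} {E : Lit n → Lit n → Prop}
    (hsym : ∀ k l, E k l → E (negLit l) (negLit k)) {C : Set (Lit n)} (hC : IsSCC E C) :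
    IsSCC E (negLit '' C) := by
  obtain ⟨hne, hmut, hmax⟩ := hC
  refine ⟨hne.image _, reach_image_negLit hsym hmut, fun D hCD hD => ?_⟩
  have hback : negLit '' D = C := by
    refine hmax _ ?_ (reach_image_negLit hsym hD)
    simpa only [image_negLit_image_negLit] using Set.image_mono (f := negLit) hCD
  rw [← hback, image_negLit_image_negLit]

lemma SourceLike.sinkLike_image_negLit {n : ℕ} {E : Lit n → Lit n → Prop}
    (hsym : ∀ k l, E k l → E (negLit l) (negLit k)) {C : Set (Lit n)} (hsrc : SourceLike E C) :
    SinkLike E (negLit '' C) := by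
  rintro _ ⟨x, hx, rfl⟩ v hv hE
  have hEv : E (negLit v) x := by simpa only [negLit_negLit] using hsym _ _ hE
  have hnv : negLit v ∈ C := by_contra fun hnv => hsrc _ hnv x hx hEv
  exact hv ⟨negLit v, hnv, negLit_negLit v⟩

lemma disjoint_image_negLit {n : ℕ} {E : Lit n → Lit n → Prop} {C : Set (Lit n)}
    (hmut : ∀ x ∈ C, ∀ y ∈ C, Reach E x y) (hord : ∀ x ∈ C, ¬ ContraLit E x) :
    Disjoint C (negLit '' C) := by
  rw [Set.disjoint_left]
  rintro _ hnx ⟨x, hx, rfl⟩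
  exact hord x hx ⟨hmut x hx _ hnx, hmut _ hnx x hx⟩

/-- If `C` is an ordinary (non-contradictory) source-like SCC of an implication digraph,
then the set of negations of its literals is a sink-like SCC disjoint from `C`. -/
theorem stmt3 {n : ℕ} (E : Lit n → Lit n → Prop)
    (hsym : ∀ k l, E k l → E (negLit l) (negLit k))
    (C : Set (Lit n)) (hC : IsSCC E C)
    (hord : ∀ x ∈ C, ¬ ContraLit E x)
    (hsrc : SourceLike E C) :
    IsSCC E (negLit '' C) ∧ SinkLike E (negLit '' C) ∧ Disjoint C (negLit '' C) :=
  ⟨hC.image_negLit hsym, hsrc.sinkLike_image_negLit hsym, disjoint_image_negLit hC.2.1 hord⟩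
end
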